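/- Conversely to the low-dimensionality theorem: if α_ε^V(P) = α_ε(P) and both suprema are attained, then the subspace V contains a vector proportional to a right singular vector corresponding to σ_min(P(z̄)) for some point z̄ ∈ Λ_ε(P) with Re(z̄) = α_ε(P). -/

import Mathlib

/-! A `V` with orthonormal columns maps unit vectors to unit vectors, so
`σ_min(P(z)) ≤ σ_min(P(z)V)` and `Λ_ε^V(P) ⊆ Λ_ε(P)`; with `α_ε^V(P) = α_ε(P)` the rightmost
point `z_V` of `Λ_ε^V(P)` is a rightmost point of `Λ_ε(P)`. There the defining inequality is an
equality, since strict inequality is open and would let one move right inside `Λ_ε(P)`. Hence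
`σ_min(P(z_V)V) ≤ ε p_w(|z_V|) = σ_min(P(z_V)) ≤ σ_min(P(z_V)V)`, and for a minimising unit
vector `u` of `P(z_V)V` the vector `Vu ∈ V` is a right singular vector of `P(z_V)` for `σ_min`. -/

open Matrix Complex

/-- Euclidean norm of a complex vector. -/
noncomputable def vnorm {ι : Type*} [Fintype ι] (v : ι → ℂ) : ℝ :=
  Real.sqrt (∑ i, ‖v i‖ ^ 2)

/-- Smallest singular value of a (possibly rectangular) complex matrix:
the infimum of `‖A v‖` over unit vectors `v`. -/
noncomputable def sigmaMin {ι κ : Type*} [Fintype ι] [Fintype κ]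
    (A : Matrix ι κ ℂ) : ℝ :=
  sInf {t : ℝ | ∃ v : κ → ℂ, vnorm v = 1 ∧ t = vnorm (A.mulVec v)}

/-- Spectral (operator 2-) norm of a complex matrix. -/
noncomputable def specNorm {ι κ : Type*} [Fintype ι] [Fintype κ]
    (A : Matrix ι κ ℂ) : ℝ :=
  sSup {t : ℝ | ∃ v : κ → ℂ, vnorm v = 1 ∧ t = vnorm (A.mulVec v)}

/-- The weight/scaling function `p_w(z) = √(w_m² z⁴ + w_c² z² + w_k²)`. -/
noncomputable def pw (wm wc wk z : ℝ) : ℝ :=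
  Real.sqrt (wm ^ 2 * z ^ 4 + wc ^ 2 * z ^ 2 + wk ^ 2)

/-- The quadratic matrix polynomial `P(z) = z² M + z C + K`. -/
noncomputable def Ppoly {n : ℕ} (M C K : Matrix (Fin n) (Fin n) ℂ) (z : ℂ) :
    Matrix (Fin n) (Fin n) ℂ :=
  z ^ 2 • M + z • C + K

/-- The column span (range) of a matrix, viewed as a subspace of `ℂⁿ`. -/
noncomputable def colSpan {n r : ℕ} (A : Matrix (Fin n) (Fin r) ℂ) : Submodule ℂ (Fin n → ℂ) :=
  Submodule.span ℂ (Set.range fun j => fun i => A i j)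

/-- The ε-pseudospectrum of the quadratic matrix polynomial `P(λ)=λ²M+λC+K`
(singular value characterization). -/
noncomputable def Lam {n : ℕ} (M C K : Matrix (Fin n) (Fin n) ℂ)
    (ε wm wc wk : ℝ) : Set ℂ :=
  {z : ℂ | sigmaMin (Ppoly M C K z) ≤ ε * pw wm wc wk ‖z‖}

/-- The restricted ε-pseudospectrum determined by the basis matrix `Vm`. -/
noncomputable def LamRes {n r : ℕ} (M C K : Matrix (Fin n) (Fin n) ℂ)
    (Vm : Matrix (Fin n) (Fin r) ℂ) (ε wm wc wk : ℝ) : Set ℂ :=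
  {z : ℂ | sigmaMin (Ppoly M C K z * Vm) ≤ ε * pw wm wc wk ‖z‖}

section SingularValues

variable {ι κ ρ : Type*} [Fintype ι] [Fintype κ] [Fintype ρ]

lemma vnorm_eq_norm_toLp (v : κ → ℂ) : vnorm v = ‖WithLp.toLp 2 v‖ := by
  rw [EuclideanSpace.norm_eq]
  rfl

lemma continuous_vnorm : Continuous (vnorm : (κ → ℂ) → ℝ) := by
  simp only [funext vnorm_eq_norm_toLp]
  exact continuous_norm.comp (PiLp.continuous_toLp 2 _)

lemma isCompact_setOf_vnorm_eq_one : IsCompact {v : κ → ℂ | vnorm v = 1} := by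
  have : {v : κ → ℂ | vnorm v = 1} = WithLp.ofLp '' Metric.sphere (0 : EuclideanSpace ℂ κ) 1 := by
    ext v
    exact ⟨fun h => ⟨WithLp.toLp 2 v, by simpa [vnorm_eq_norm_toLp] using h, rfl⟩,
      by rintro ⟨x, hx, rfl⟩; simpa [vnorm_eq_norm_toLp] using hx⟩
  rw [this]
  exact (isCompact_sphere _ _).image (PiLp.continuous_ofLp 2 _)

lemma sigmaMin_eq_sInf_image (A : Matrix ι κ ℂ) :
    sigmaMin A = sInf ((fun v => vnorm (A *ᵥ v)) '' {v | vnorm v = 1}) := by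
  simp only [sigmaMin, Set.image, eq_comm]
  rfl

lemma continuous_sigmaMin : Continuous (sigmaMin : Matrix ι κ ℂ → ℝ) := by
  simp only [funext sigmaMin_eq_sInf_image]
  exact isCompact_setOf_vnorm_eq_one.continuous_sInf
    (continuous_vnorm.comp (continuous_fst.matrix_mulVec continuous_snd))

lemma sigmaMin_le (A : Matrix ι κ ℂ) {v : κ → ℂ} (hv : vnorm v = 1) :
    sigmaMin A ≤ vnorm (A *ᵥ v) :=
  csInf_le ⟨0, by rintro t ⟨v, -, rfl⟩; exact Real.sqrt_nonneg _⟩ ⟨v, hv, rfl⟩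

lemma exists_vnorm_eq_one_vnorm_mulVec_eq_sigmaMin [Nonempty κ] (A : Matrix ι κ ℂ) :
    ∃ v : κ → ℂ, vnorm v = 1 ∧ vnorm (A *ᵥ v) = sigmaMin A := by
  classical
  have hne : {v : κ → ℂ | vnorm v = 1}.Nonempty :=
    ⟨Pi.single (Classical.arbitrary κ) 1, by simp [vnorm, Pi.single_apply, apply_ite]⟩
  rw [sigmaMin_eq_sInf_image]
  exact (isCompact_setOf_vnorm_eq_one.image
    (continuous_vnorm.comp (continuous_const.matrix_mulVec continuous_id))).sInf_mem
    (hne.image _)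

lemma star_dotProduct_self_eq_vnorm_sq (v : κ → ℂ) : star v ⬝ᵥ v = ((vnorm v ^ 2 : ℝ) : ℂ) := by
  rw [vnorm, Real.sq_sqrt (by positivity), dotProduct]
  push_cast
  refine Finset.sum_congr rfl fun i _ => ?_
  rw [Pi.star_apply, RCLike.star_def, mul_comm, Complex.mul_conj, Complex.normSq_eq_norm_sq]
  push_cast
  rfl

lemma vnorm_mulVec_of_conjTranspose_mul_self [DecidableEq ρ] {V : Matrix κ ρ ℂ}
    (hV : Vᴴ * V = 1) (u : ρ → ℂ) : vnorm (V *ᵥ u) = vnorm u := by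
  have h : star (V *ᵥ u) ⬝ᵥ V *ᵥ u = star u ⬝ᵥ u := by
    rw [star_mulVec, dotProduct_mulVec, vecMul_vecMul, hV, vecMul_one]
  rw [star_dotProduct_self_eq_vnorm_sq, star_dotProduct_self_eq_vnorm_sq, Complex.ofReal_inj] at h
  exact (pow_left_inj₀ (Real.sqrt_nonneg _) (Real.sqrt_nonneg _) two_ne_zero).mp h

lemma sigmaMin_le_sigmaMin_mul_of_conjTranspose_mul_self [DecidableEq ρ] [Nonempty ρ]
    (A : Matrix ι κ ℂ) {V : Matrix κ ρ ℂ} (hV : Vᴴ * V = 1) : sigmaMin A ≤ sigmaMin (A * V) := by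
  obtain ⟨u, hu, hAu⟩ := exists_vnorm_eq_one_vnorm_mulVec_eq_sigmaMin (A * V)
  rw [← hAu, ← mulVec_mulVec]
  exact sigmaMin_le A (by rw [vnorm_mulVec_of_conjTranspose_mul_self hV, hu])

lemma exists_mem_colSpan_vnorm_mulVec_eq_sigmaMin {n r : ℕ} [NeZero r]
    (A : Matrix ι (Fin n) ℂ) {V : Matrix (Fin n) (Fin r) ℂ} (hV : Vᴴ * V = 1)
    (h : sigmaMin (A * V) ≤ sigmaMin A) :
    ∃ w ∈ colSpan V, vnorm w = 1 ∧ vnorm (A *ᵥ w) = sigmaMin A := by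
  obtain ⟨u, hu, hAu⟩ := exists_vnorm_eq_one_vnorm_mulVec_eq_sigmaMin (A * V)
  refine ⟨V *ᵥ u, ?_, by rw [vnorm_mulVec_of_conjTranspose_mul_self hV, hu], ?_⟩
  · change V *ᵥ u ∈ Submodule.span ℂ (Set.range V.col)
    rw [← range_mulVecLin]
    exact LinearMap.mem_range_self _ u
  · rw [mulVec_mulVec, hAu]
    exact h.antisymm (sigmaMin_le_sigmaMin_mul_of_conjTranspose_mul_self A hV)

end SingularValues

lemma Complex.re_lt_sSup_of_mem_interior {S : Set ℂ} (hS : BddAbove (re '' S)) {z : ℂ}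
    (hz : z ∈ interior S) : z.re < sSup (re '' S) := by
  obtain ⟨δ, hδ, hball⟩ := Metric.isOpen_iff.mp isOpen_interior z hz
  have hmem : z + (δ / 2 : ℝ) ∈ S := interior_subset <| hball <| by
    rw [Metric.mem_ball, dist_self_add_left, Complex.norm_real, Real.norm_of_nonneg (by positivity)]
    linarith
  have := le_csSup hS ⟨_, hmem, rfl⟩
  simp only [add_re, ofReal_re] at this
  linarith

lemma continuous_Ppoly {n : ℕ} (M C K : Matrix (Fin n) (Fin n) ℂ) :
    Continuous (Ppoly M C K) := by
  unfold Ppoly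
  fun_prop

lemma continuous_pw (wm wc wk : ℝ) : Continuous (pw wm wc wk) := by
  unfold pw
  fun_prop

/-- Strict inequality in the definition of `Λ_ε(P)` is an open condition, so it fails where
`Re` attains its supremum over `Λ_ε(P)`. -/
lemma le_sigmaMin_of_re_eq_sSup {n : ℕ} {M C K : Matrix (Fin n) (Fin n) ℂ} {ε wm wc wk : ℝ}
    (hbdd : BddAbove (re '' Lam M C K ε wm wc wk)) {z : ℂ}
    (hz : z.re = sSup (re '' Lam M C K ε wm wc wk)) :
    ε * pw wm wc wk ‖z‖ ≤ sigmaMin (Ppoly M C K z) := by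
  by_contra! hlt
  have hopen : IsOpen {z | sigmaMin (Ppoly M C K z) < ε * pw wm wc wk ‖z‖} :=
    isOpen_lt (continuous_sigmaMin.comp (continuous_Ppoly M C K))
      (continuous_const.mul ((continuous_pw wm wc wk).comp continuous_norm))
  have hsub : {z | sigmaMin (Ppoly M C K z) < ε * pw wm wc wk ‖z‖} ⊆ Lam M C K ε wm wc wk :=
    fun _ h => Set.mem_ofPred.mpr (le_of_lt h)
  have hint : z ∈ interior (Lam M C K ε wm wc wk) := interior_maximal hsub hopen hlt
  exact (Complex.re_lt_sSup_of_mem_interior hbdd hint).ne hz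

theorem low_dimensionality_converse_general
    {n r : ℕ} (hr : 0 < r)
    (M C K : Matrix (Fin n) (Fin n) ℂ)
    (ε wm wc wk : ℝ)
    (Vm : Matrix (Fin n) (Fin r) ℂ) (hVm : Vmᴴ * Vm = 1)
    (hbd : Bornology.IsBounded (Lam M C K ε wm wc wk))
    (heq : sSup (Complex.re '' LamRes M C K Vm ε wm wc wk) =
      sSup (Complex.re '' Lam M C K ε wm wc wk))
    (zV : ℂ) (hzV : zV ∈ LamRes M C K Vm ε wm wc wk)
    (hzVmax : zV.re = sSup (Complex.re '' LamRes M C K Vm ε wm wc wk)) :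
    ∃ zb ∈ Lam M C K ε wm wc wk,
      zb.re = sSup (Complex.re '' Lam M C K ε wm wc wk) ∧
      ∃ v ∈ colSpan Vm, v ≠ 0 ∧
        ∃ (w : Fin n → ℂ) (c : ℂ), vnorm w = 1 ∧
          vnorm ((Ppoly M C K zb).mulVec w) = sigmaMin (Ppoly M C K zb) ∧
          v = c • w := by
  have : NeZero r := ⟨hr.ne'⟩
  have hbdd : BddAbove (re '' Lam M C K ε wm wc wk) :=
    (reCLM.lipschitz.isBounded_image hbd).bddAbove
  have hzVmem : zV ∈ Lam M C K ε wm wc wk :=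
    (sigmaMin_le_sigmaMin_mul_of_conjTranspose_mul_self _ hVm).trans hzV
  have hre : zV.re = sSup (re '' Lam M C K ε wm wc wk) := hzVmax.trans heq
  obtain ⟨w, hwV, hw, hPw⟩ := exists_mem_colSpan_vnorm_mulVec_eq_sigmaMin _ hVm
    (hzV.trans (le_sigmaMin_of_re_eq_sSup hbdd hre))
  have hw0 : w ≠ 0 := by
    rintro rfl
    simp [vnorm] at hw
  exact ⟨zV, hzVmem, hre, w, hwV, hw0, w, 1, hw, hPw, (one_smul ℂ w).symm⟩

/-- converse of low dimensionality: if `α_ε^V(P) = α_ε(P)` and both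
suprema are attained, then the subspace spanned by the orthonormal columns of `Vm`
contains a (nonzero) vector proportional to a right singular vector corresponding to
`σ_min(P(z̄))` for some `z̄ ∈ Λ_ε(P)` with `Re z̄ = α_ε(P)`. -/
theorem low_dimensionality_converse
    {n r : ℕ} (hr : 0 < r)
    (M C K : Matrix (Fin n) (Fin n) ℂ)
    (ε wm wc wk : ℝ) (hε : 0 < ε) (hwm : 0 ≤ wm) (hwc : 0 ≤ wc) (hwk : 0 ≤ wk)
    (Vm : Matrix (Fin n) (Fin r) ℂ) (hVm : Vmᴴ * Vm = 1)
    (hbd : Bornology.IsBounded (Lam M C K ε wm wc wk))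
    (hne : (Lam M C K ε wm wc wk).Nonempty)
    (heq : sSup (Complex.re '' LamRes M C K Vm ε wm wc wk) =
      sSup (Complex.re '' Lam M C K ε wm wc wk))
    (zV : ℂ) (hzV : zV ∈ LamRes M C K Vm ε wm wc wk)
    (hzVmax : zV.re = sSup (Complex.re '' LamRes M C K Vm ε wm wc wk))
    (zF : ℂ) (hzF : zF ∈ Lam M C K ε wm wc wk)
    (hzFmax : zF.re = sSup (Complex.re '' Lam M C K ε wm wc wk)) :
    ∃ zb ∈ Lam M C K ε wm wc wk,
      zb.re = sSup (Complex.re '' Lam M C K ε wm wc wk) ∧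
      ∃ v ∈ colSpan Vm, v ≠ 0 ∧
        ∃ (w : Fin n → ℂ) (c : ℂ), vnorm w = 1 ∧
          vnorm ((Ppoly M C K zb).mulVec w) = sigmaMin (Ppoly M C K zb) ∧
          v = c • w :=
  low_dimensionality_converse_general hr M C K ε wm wc wk Vm hVm hbd heq zV hzV hzVmax
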